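/- Let g(x) = x₁² + x₂² + x₃² + x₄² on ℝ⁴. The vector field V(x) = g(x)^{−3} (−x₁ − x₂ + x₁g(x), x₁ − x₂ + x₂g(x), −x₃ − x₄ + x₃g(x), x₃ − x₄ + x₄g(x)) on G' = ℝ⁴ ∖ {0} satisfies div V(x) = 2 g(x)^{−3} > 0 for all x ∈ G'. -/

import Mathlib

/-!
With `g x = x ⬝ᵥ x`, the field is `V = g⁻³ • F` where `F x = M x + g x • x` and `M = -1 + J` for a
complex structure `J` on `ℝ⁴`; thus `x ⬝ᵥ M x = -g x` and `tr M = -4`. The product rule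
`div (u • F) = Du (F) + u · div F`, applied with `D(g⁻³)ₓ v = -6 g⁻⁴ (x ⬝ᵥ v)` and
`div F = tr M + 2g + 4g`, gives `div V = -6 g⁻⁴ (g² - g) + g⁻³ (6g - 4) = 2 g⁻³`.
-/

open Matrix

section
variable {ι : Type*} [Fintype ι] [DecidableEq ι]

noncomputable def divergence (F : (ι → ℝ) → ι → ℝ) (x : ι → ℝ) : ℝ :=
  ∑ i, fderiv ℝ (fun y => F y i) x (Pi.single i 1)

variable {F G : (ι → ℝ) → ι → ℝ} {u : (ι → ℝ) → ℝ} {x : ι → ℝ}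

theorem divergence_add (hF : DifferentiableAt ℝ F x) (hG : DifferentiableAt ℝ G x) :
    divergence (fun y => F y + G y) x = divergence F x + divergence G x := by
  simp only [divergence, Pi.add_apply, ← Finset.sum_add_distrib]
  refine Finset.sum_congr rfl fun i _ => ?_
  rw [fderiv_fun_add (differentiableAt_pi.1 hF i) (differentiableAt_pi.1 hG i)]
  rfl

theorem divergence_smul (hu : DifferentiableAt ℝ u x) (hF : DifferentiableAt ℝ F x) :
    divergence (fun y => u y • F y) x = fderiv ℝ u x (F x) + u x * divergence F x := by
  have hu_apply : fderiv ℝ u x (F x) = ∑ i, fderiv ℝ u x (Pi.single i 1) * F x i := by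
    conv_lhs => rw [pi_eq_sum_univ' (F x)]
    simp only [map_sum, map_smul, smul_eq_mul, mul_comm]
  simp only [divergence, Pi.smul_apply, smul_eq_mul, hu_apply, Finset.mul_sum,
    ← Finset.sum_add_distrib]
  refine Finset.sum_congr rfl fun i _ => ?_
  rw [fderiv_fun_mul hu (differentiableAt_pi.1 hF i)]
  simp only [_root_.add_apply, _root_.smul_apply, smul_eq_mul]
  ring

theorem divergence_mulVec (M : Matrix ι ι ℝ) : divergence (fun y => M *ᵥ y) x = M.trace := by
  let A := (mulVecLin M).toContinuousLinearMap
  refine Finset.sum_congr rfl fun i _ => ?_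
  change fderiv ℝ (fun y => A y i) x (Pi.single i 1) = M i i
  rw [fderiv_apply A.differentiableAt i, A.fderiv]
  simp [A]

theorem divergence_id : divergence (fun y => y) x = Fintype.card ι := by
  simpa using divergence_mulVec (x := x) (1 : Matrix ι ι ℝ)

end

section
variable {ι : Type*} [Fintype ι]

theorem differentiable_dotProduct_self : Differentiable ℝ (fun y : ι → ℝ => y ⬝ᵥ y) := by
  unfold dotProduct
  fun_prop

theorem dotProduct_self_pos {x : ι → ℝ} (hx : x ≠ 0) : 0 < x ⬝ᵥ x := by
  simpa using dotProduct_self_star_pos_iff.2 hx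

theorem fderiv_dotProduct_self_apply (x v : ι → ℝ) :
    fderiv ℝ (fun y : ι → ℝ => y ⬝ᵥ y) x v = 2 * (x ⬝ᵥ v) := by
  have h := HasFDerivAt.fun_sum (u := Finset.univ) fun i _ =>
    (hasFDerivAt_apply (𝕜 := ℝ) i x).fun_mul (hasFDerivAt_apply i x)
  rw [show (fun y : ι → ℝ => y ⬝ᵥ y) = fun y => ∑ i, y i * y i from rfl, h.fderiv]
  simp [dotProduct, Finset.mul_sum, two_mul, Finset.sum_add_distrib]

end

def spiralMatrix : Matrix (Fin 4) (Fin 4) ℝ :=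
  !![-1, -1, 0, 0; 1, -1, 0, 0; 0, 0, -1, -1; 0, 0, 1, -1]

theorem trace_spiralMatrix : spiralMatrix.trace = -4 := by
  simp [spiralMatrix, trace, Fin.sum_univ_four]
  norm_num

theorem dotProduct_spiralMatrix_mulVec (x : Fin 4 → ℝ) :
    x ⬝ᵥ spiralMatrix *ᵥ x = -(x ⬝ᵥ x) := by
  simp [spiralMatrix, dotProduct, mulVec, Fin.sum_univ_four]
  ring

theorem spiralMatrix_mulVec_add_smul (y : Fin 4 → ℝ) (c : ℝ) :
    spiralMatrix *ᵥ y + c • y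
      = ![-y 0 - y 1 + y 0 * c, y 0 - y 1 + y 1 * c, -y 2 - y 3 + y 2 * c, y 2 - y 3 + y 3 * c] := by
  ext i
  fin_cases i <;> simp [spiralMatrix, dotProduct, Fin.sum_univ_four] <;> ring

theorem divergence_spiral_field {x : Fin 4 → ℝ} (hx : x ≠ 0) :
    divergence (fun y => (y ⬝ᵥ y)⁻¹ ^ 3 • (spiralMatrix *ᵥ y + (y ⬝ᵥ y) • y)) x
      = 2 * (x ⬝ᵥ x)⁻¹ ^ 3 := by
  have hq : x ⬝ᵥ x ≠ 0 := (dotProduct_self_pos hx).ne'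
  have hq_diff := differentiable_dotProduct_self (ι := Fin 4)
  have hu : HasFDerivAt (fun y : Fin 4 → ℝ => (y ⬝ᵥ y)⁻¹ ^ 3) _ x :=
    ((hasDerivAt_inv hq).pow 3).comp_hasFDerivAt (f := fun y => y ⬝ᵥ y) x (hq_diff x).hasFDerivAt
  have hF : Differentiable ℝ fun y : Fin 4 → ℝ => spiralMatrix *ᵥ y :=
    (mulVecLin spiralMatrix).toContinuousLinearMap.differentiable
  have hR : DifferentiableAt ℝ (fun y : Fin 4 → ℝ => (y ⬝ᵥ y) • y) x :=
    (hq_diff x).fun_smul differentiableAt_fun_id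
  rw [divergence_smul hu.differentiableAt ((hF x).fun_add hR), hu.fderiv,
    divergence_add (hF x) hR, divergence_mulVec,
    divergence_smul (hq_diff x) differentiableAt_fun_id, divergence_id]
  simp only [_root_.smul_apply, smul_eq_mul, fderiv_dotProduct_self_apply, Fintype.card_fin,
    dotProduct_add, dotProduct_smul, dotProduct_spiralMatrix_mulVec, trace_spiralMatrix,
    Nat.reduceSub, Nat.cast_ofNat]
  field_simp
  ring

/-- The vector field V = g⁻³·f on ℝ⁴ ∖ {0} has divergence 2·g⁻³ > 0. -/
theorem example_2_4_divergence
    (g : (Fin 4 → ℝ) → ℝ) (hg : g = fun x => x 0 ^ 2 + x 1 ^ 2 + x 2 ^ 2 + x 3 ^ 2)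
    (V : (Fin 4 → ℝ) → (Fin 4 → ℝ))
    (hV : ∀ x, V x = (g x)⁻¹ ^ 3 • ![ -x 0 - x 1 + x 0 * g x,
                                      x 0 - x 1 + x 1 * g x,
                                      -x 2 - x 3 + x 2 * g x,
                                      x 2 - x 3 + x 3 * g x ]) :
    ∀ x : Fin 4 → ℝ, x ≠ 0 →
      (∑ i, fderiv ℝ (fun y => V y i) x (Pi.single i 1)) = 2 * (g x)⁻¹ ^ 3 ∧
      0 < ∑ i, fderiv ℝ (fun y => V y i) x (Pi.single i 1) := by
  intro x hx
  have hg_eq : ∀ y, g y = y ⬝ᵥ y := fun y => by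
    simp [hg, dotProduct, Fin.sum_univ_four, sq]
  have hV_eq : V = fun y => (y ⬝ᵥ y)⁻¹ ^ 3 • (spiralMatrix *ᵥ y + (y ⬝ᵥ y) • y) := by
    funext y
    rw [hV, spiralMatrix_mulVec_add_smul, hg_eq]
  have hg_pos : 0 < g x := hg_eq x ▸ dotProduct_self_pos hx
  change divergence V x = _ ∧ 0 < divergence V x
  rw [hV_eq, divergence_spiral_field hx, ← hg_eq]
  exact ⟨rfl, by positivity⟩
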